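/- Fix k ∈ (1,3). For a fixed speed c and delays 0 ≤ h₁ < h₂ (with c ≥ c_#(h₁) so that the roots exist), one has λ₁(c,h₁)/μ₁(c,h₁) < λ₁(c,h₂)/μ₁(c,h₂); i.e. λ₁/μ₁ is strictly increasing in the delay h as well as in the velocity c. Consequently, the function c_* : [0,h_p] → (0,∞) implicitly defined by λ₁(c_*(h),h)/μ₁(c_*(h),h) = (3−k)/4 (on the maximal interval [0,h_p] where this equation has a solution c_*(h) ≥ c_#(h)) is continuous and strictly decreasing. -/

import Mathlib

/-!
In the delay the comparison is direct: for `z > 0`, `χ` decreases and `χ_κ` increases in `h`, so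
`λ₁` increases and `μ₁` decreases.

In the speed, implicit differentiation would give `∂_c log (λ₁/μ₁)` the sign of
`(1 + k h E) (2μ₁ - c + h c F) - (1 - h F) (2λ₁ - c - k c h E)` with `E = e^{-λ₁ch}`,
`F = e^{-μ₁ch}`, which is positive since `λ₁ < μ₁` and `χ'(λ₁) ≥ 0` at the largest root.
Instead of differentiating the roots, subtracting the characteristic equations at two speeds and
using `e^{-a} - e^{-b} ≥ (b - a) e^{-b}` gives a secant form of this inequality,
which is positive near the diagonal because the roots depend continuously on `c`; a continuous
function that increases to the right of every point is increasing.

For `c_*`, the two monotonicities force `c_*` to decrease. Continuity at `h₀` compares with the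
ratio at the fixed speeds `c_*(h₀) ∓ ε`, using upper semicontinuity of `λ₁` (convexity of `χ`),
lower semicontinuity away from `c_#` (otherwise `λ₁` would be a double root), continuity of `μ₁`,
and one-sided continuity of the monotone `c_#`, which holds because double roots pass to limits.
-/

open Filter Set

noncomputable section

/-- The characteristic function `χ(z,c) = z² - cz - 1 + k e^{-zch}` at the zero
equilibrium of the toy model. -/
def chi (k c h z : ℝ) : ℝ := z ^ 2 - c * z - 1 + k * Real.exp (-(z * c * h))

/-- The characteristic function `χ_κ(z) = z² - cz - 1 - e^{-zch}` at the positive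
equilibrium `κ = 2` of the toy model. -/
def chiK (c h z : ℝ) : ℝ := z ^ 2 - c * z - 1 - Real.exp (-(z * c * h))

/-- `c` is a positive speed at which `χ(·,c)` has a double positive root. -/
def IsCsharp (k h c : ℝ) : Prop :=
  0 < c ∧ ∃ z : ℝ, 0 < z ∧ chi k c h z = 0 ∧
    2 * z - c - k * c * h * Real.exp (-(z * c * h)) = 0

open Topology

theorem HasDerivAt.nonneg_of_isMinOn_Ici {f : ℝ → ℝ} {f' x : ℝ} (hf : HasDerivAt f f' x)
    (hmin : IsMinOn f (Ici x) x) : 0 ≤ f' := by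
  have hslope := (hasDerivAt_iff_tendsto_slope.mp hf).mono_left
    (nhdsWithin_mono x fun y (hy : y ∈ Ioi x) => (ne_of_gt hy : y ≠ x))
  refine ge_of_tendsto hslope ?_
  filter_upwards [self_mem_nhdsWithin] with y (hy : x < y)
  rw [slope_def_field]
  exact div_nonneg (sub_nonneg.mpr (hmin (le_of_lt hy))) (sub_pos.mpr hy).le

theorem StrictMonoOn.of_continuousOn_of_eventually_lt {α β : Type*}
    [ConditionallyCompleteLinearOrder α] [TopologicalSpace α] [OrderTopology α]
    [DenselyOrdered α] [LinearOrder β] [TopologicalSpace β] [OrderClosedTopology β]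
    {f : α → β} {s : Set α} (hs : s.OrdConnected) (hf : ContinuousOn f s)
    (hloc : ∀ x ∈ s, ∀ᶠ y in 𝓝[>] x, f x < f y) : StrictMonoOn f s := by
  have hmono : MonotoneOn f s := by
    intro x hx y hy hxy
    have hsub : Icc x y ⊆ {z | f x ≤ f z} := by
      refine IsClosed.Icc_subset_of_forall_mem_nhdsWithin ?_ le_rfl fun z hz => ?_
      · rw [inter_comm]
        exact (hf.mono (hs.out hx hy)).preimage_isClosed_of_isClosed isClosed_Icc isClosed_Ici
      · filter_upwards [hloc z (hs.out hx hy (Ico_subset_Icc_self hz.2))] with w hw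
        exact hz.1.trans hw.le
    exact hsub ⟨hxy, le_rfl⟩
  intro x hx y hy hxy
  have := nhdsGT_neBot_of_exists_gt ⟨y, hxy⟩
  obtain ⟨w, hxw, hw⟩ := ((hloc x hx).and (Ioo_mem_nhdsGT hxy)).exists
  exact hxw.trans_le (hmono (hs.out hx hy (Ioo_subset_Icc_self hw)) hy hw.2.le)

theorem eventually_forall_eq_zero_lt {X : Type*} [TopologicalSpace X] {F : X → ℝ → ℝ}
    {x₀ : X} {a b : ℝ} (hF : ∀ x, ConvexOn ℝ univ (F x))
    (ha : ContinuousAt (F · a) x₀) (hb : ContinuousAt (F · b) x₀) (hab : a < b)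
    (hlt : F x₀ a < F x₀ b) (hpos : 0 < F x₀ b) :
    ∀ᶠ x in 𝓝 x₀, ∀ z, F x z = 0 → z < b := by
  filter_upwards [(ha.prodMk hb).eventually (isOpen_lt continuous_fst continuous_snd
      |>.mem_nhds hlt), hb.eventually (lt_mem_nhds hpos)] with x hlt' hpos' z hz
  by_contra! hbz
  rcases hbz.eq_or_lt with rfl | hbz
  · exact hpos'.ne' hz
  · have := (hF x).lt_right_of_left_lt (mem_univ a) (mem_univ z)
      (Ioo_subset_openSegment ⟨hab, hbz⟩) hlt'
    linarith

theorem sub_mul_exp_neg_le (a b : ℝ) :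
    (b - a) * Real.exp (-b) ≤ Real.exp (-a) - Real.exp (-b) := by
  have h := mul_le_mul_of_nonneg_left (Real.add_one_le_exp (b - a)) (Real.exp_pos (-b)).le
  rw [← Real.exp_add, show -b + (b - a) = -a by ring] at h
  linarith

theorem one_div_succ_mem_Ioc (n : ℕ) : 1 / ((n : ℝ) + 1) ∈ Ioc 0 1 :=
  ⟨Nat.one_div_pos_of_nat, (div_le_one (by positivity)).2 (by linarith [n.cast_nonneg (α := ℝ)])⟩

section Characteristic

variable {k c h z lam : ℝ}

@[fun_prop]
theorem Continuous.chi {X : Type*} [TopologicalSpace X] {k c h z : X → ℝ} (hk : Continuous k)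
    (hc : Continuous c) (hh : Continuous h) (hz : Continuous z) :
    Continuous fun x => chi (k x) (c x) (h x) (z x) := by
  unfold _root_.chi; fun_prop

@[fun_prop]
theorem Continuous.chiK {X : Type*} [TopologicalSpace X] {c h z : X → ℝ} (hc : Continuous c)
    (hh : Continuous h) (hz : Continuous z) : Continuous fun x => chiK (c x) (h x) (z x) := by
  unfold _root_.chiK; fun_prop

theorem convexOn_chi (hk : 0 ≤ k) : ConvexOn ℝ univ (chi k c h) := by
  have hexp : ConvexOn ℝ univ fun z : ℝ => Real.exp (-(z * c * h)) := by
    have := convexOn_exp.comp_linearMap ((-(c * h)) • LinearMap.id (R := ℝ) (M := ℝ))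
    simpa [Function.comp_def, mul_comm, mul_left_comm, mul_assoc] using this
  have hquad : ConvexOn ℝ univ fun z : ℝ => z ^ 2 - c * z - 1 := by
    refine (((even_two.convexOn_pow : ConvexOn ℝ univ fun z : ℝ => z ^ 2).add
      (((-c) • LinearMap.id (R := ℝ) (M := ℝ)).convexOn convex_univ)).add_const (-1)).congr ?_
    intro z _
    simp only [Pi.add_apply, LinearMap.smul_apply, LinearMap.id_apply, smul_eq_mul]
    ring
  exact hquad.add (hexp.smul hk)

theorem hasDerivAt_chi (k c h z : ℝ) :
    HasDerivAt (chi k c h) (2 * z - c - k * c * h * Real.exp (-(z * c * h))) z := by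
  have hlin : HasDerivAt (fun z : ℝ => -(z * c * h)) (-(c * h)) z := by
    simpa using (((hasDerivAt_id z).mul_const c).mul_const h).fun_neg
  refine ((((hasDerivAt_pow 2 z).sub ((hasDerivAt_id z).const_mul c)).sub_const 1).add
    (hlin.exp.const_mul k)).congr_deriv ?_
  push_cast; ring

theorem chi_pos_of_add_two_le (hk : 0 < k) (hc : 0 < c) (hz : c + 2 ≤ z) :
    0 < chi k c h z := by
  have := Real.exp_pos (-(z * c * h))
  unfold chi; nlinarith

theorem chiK_pos_of_add_two_le (hc : 0 < c) (hh : 0 ≤ h) (hz : c + 2 ≤ z) :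
    0 < chiK c h z := by
  have hz0 : 0 < z := by linarith
  have : Real.exp (-(z * c * h)) ≤ 1 :=
    Real.exp_le_one_iff.mpr (by simp only [neg_nonpos]; positivity)
  unfold chiK; nlinarith

theorem chiK_zero (c h : ℝ) : chiK c h 0 = -2 := by
  norm_num [chiK]

theorem exists_ge_chi_eq_zero (hk : 0 < k) (hc : 0 < c) (hz : chi k c h z ≤ 0) :
    ∃ y, z ≤ y ∧ chi k c h y = 0 := by
  have hzc : z ≤ c + 2 := by
    by_contra! hzc
    exact (chi_pos_of_add_two_le hk hc hzc.le).not_ge hz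
  obtain ⟨y, hy, hy0⟩ := intermediate_value_Icc hzc
    (by fun_prop : Continuous (chi k c h)).continuousOn
    ⟨hz, (chi_pos_of_add_two_le hk hc le_rfl).le⟩
  exact ⟨y, hy.1, hy0⟩

theorem chi_pos_of_isGreatest_of_lt (hk : 0 < k) (hc : 0 < c)
    (hlam : IsGreatest {y | chi k c h y = 0} lam) (hz : lam < z) : 0 < chi k c h z := by
  by_contra! hneg
  obtain ⟨y, hzy, hy⟩ := exists_ge_chi_eq_zero hk hc hneg
  exact (hz.trans_le hzy).not_ge (hlam.2 hy)

theorem chi_deriv_nonneg_of_isGreatest (hk : 0 < k) (hc : 0 < c)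
    (hlam : IsGreatest {y | chi k c h y = 0} lam) :
    0 ≤ 2 * lam - c - k * c * h * Real.exp (-(lam * c * h)) := by
  refine (hasDerivAt_chi k c h lam).nonneg_of_isMinOn_Ici (isMinOn_iff.2 fun y hy => ?_)
  rcases (mem_Ici.mp hy).eq_or_lt with rfl | hy
  · exact le_rfl
  · rw [show chi k c h lam = 0 from hlam.1]
    exact (chi_pos_of_isGreatest_of_lt hk hc hlam hy).le

theorem isCsharp_of_isGreatest_of_nonneg (hk : 0 < k) (hc : 0 < c) (hlam0 : 0 < lam)
    (hlam : IsGreatest {y | chi k c h y = 0} lam) {ε : ℝ} (hε : 0 < ε)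
    (hflat : ∀ y ∈ Ioo (lam - ε) lam, 0 ≤ chi k c h y) : IsCsharp k h c := by
  have hroot : chi k c h lam = 0 := hlam.1
  have hmin : IsLocalMin (chi k c h) lam := by
    filter_upwards [Ioo_mem_nhds (show lam - ε < lam by linarith) (lt_add_one lam)]
      with y hy
    rw [hroot]
    rcases lt_trichotomy y lam with hlt | rfl | hgt
    · exact hflat y ⟨hy.1, hlt⟩
    · exact hroot.ge
    · exact (chi_pos_of_isGreatest_of_lt hk hc hlam hgt).le
  exact ⟨hc, lam, hlam0, hroot, hmin.hasDerivAt_eq_zero (hasDerivAt_chi k c h lam)⟩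

theorem lt_add_one_of_chi_eq_zero (hk : 0 < k) (hc : 0 < c) (hroot : chi k c h z = 0) :
    z < c + 1 := by
  unfold chi at hroot
  nlinarith [mul_pos hk (Real.exp_pos (-(z * c * h)))]

theorem chi_lt_of_speed_lt {c₁ c₂ : ℝ} (hk : 0 ≤ k) (hh : 0 ≤ h) (hz : 0 < z) (hc : c₁ < c₂) :
    chi k c₂ h z < chi k c₁ h z := by
  have : Real.exp (-(z * c₂ * h)) ≤ Real.exp (-(z * c₁ * h)) := by gcongr
  unfold chi; nlinarith [mul_le_mul_of_nonneg_left this hk]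

theorem chi_lt_of_delay_lt {h₁ h₂ : ℝ} (hk : 0 < k) (hzc : 0 < z * c) (hh : h₁ < h₂) :
    chi k c h₂ z < chi k c h₁ z := by
  have : Real.exp (-(z * c * h₂)) < Real.exp (-(z * c * h₁)) := by gcongr
  have := mul_lt_mul_of_pos_left this hk
  unfold chi; linarith

theorem chiK_lt_of_delay_lt {h₁ h₂ : ℝ} (hzc : 0 < z * c) (hh : h₁ < h₂) :
    chiK c h₁ z < chiK c h₂ z := by
  have : Real.exp (-(z * c * h₂)) < Real.exp (-(z * c * h₁)) := by gcongr
  unfold chiK; linarith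

end Characteristic

def IsUniquePosRoot (f : ℝ → ℝ) (μ : ℝ) : Prop :=
  0 < μ ∧ f μ = 0 ∧ ∀ z, 0 < z → f z = 0 → z = μ

section Roots

variable {k c h z lam mu : ℝ}

theorem lt_of_isGreatest_of_chi_neg (hk : 0 < k) (hc : 0 < c)
    (hlam : IsGreatest {y | chi k c h y = 0} lam) (hz : chi k c h z < 0) : z < lam := by
  obtain ⟨y, hzy, hy⟩ := exists_ge_chi_eq_zero hk hc hz.le
  exact hzy.lt_of_ne (by rintro rfl; exact hz.ne hy) |>.trans_le (hlam.2 hy)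

theorem IsUniquePosRoot.chiK_neg_of_lt (hmu : IsUniquePosRoot (chiK c h) mu) (hz0 : 0 ≤ z)
    (hz : z < mu) : chiK c h z < 0 := by
  by_contra! hnonneg
  obtain ⟨y, hy, hy0⟩ := intermediate_value_Icc hz0
    (by fun_prop : Continuous (chiK c h)).continuousOn
    ⟨(chiK_zero c h).trans_le (by norm_num), hnonneg⟩
  have hypos : 0 < y := hy.1.lt_of_ne (by rintro rfl; norm_num [chiK_zero] at hy0)
  exact hz.not_ge (hmu.2.2 y hypos hy0 ▸ hy.2)

theorem IsUniquePosRoot.chiK_pos_of_gt (hmu : IsUniquePosRoot (chiK c h) mu) (hc : 0 < c)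
    (hh : 0 ≤ h) (hz : mu < z) : 0 < chiK c h z := by
  by_contra! hnonpos
  have hzc : z ≤ c + 2 := by
    by_contra! hzc
    exact (chiK_pos_of_add_two_le hc hh hzc.le).not_ge hnonpos
  obtain ⟨y, hy, hy0⟩ := intermediate_value_Icc hzc
    (by fun_prop : Continuous (chiK c h)).continuousOn
    ⟨hnonpos, (chiK_pos_of_add_two_le hc hh le_rfl).le⟩
  have := hmu.2.2 y (hmu.1.trans (hz.trans_le hy.1)) hy0
  linarith [hy.1]

theorem speed_lt_of_chiK_eq_zero (hz : 0 < z) (hroot : chiK c h z = 0) : c < z := by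
  unfold chiK at hroot
  nlinarith [Real.exp_pos (-(z * c * h))]

theorem IsUniquePosRoot.lt_of_chiK_neg (hmu : IsUniquePosRoot (chiK c h) mu) (hc : 0 < c)
    (hh : 0 ≤ h) (hz : chiK c h z < 0) : z < mu := by
  by_contra! hle
  rcases hle.eq_or_lt with rfl | hlt
  · exact hz.ne hmu.2.1
  · exact hz.not_gt (hmu.chiK_pos_of_gt hc hh hlt)

theorem IsUniquePosRoot.lt_of_chiK_pos (hmu : IsUniquePosRoot (chiK c h) mu) (hz0 : 0 ≤ z)
    (hz : 0 < chiK c h z) : mu < z := by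
  by_contra! hle
  rcases hle.eq_or_lt with rfl | hlt
  · exact hz.ne' hmu.2.1
  · exact hz.not_gt (hmu.chiK_neg_of_lt hz0 hlt)

theorem IsUniquePosRoot.lt_of_chi_eq_zero (hmu : IsUniquePosRoot (chiK c h) mu) (hk : 0 < k)
    (hc : 0 < c) (hh : 0 ≤ h) (hlam : chi k c h lam = 0) : lam < mu := by
  refine hmu.lt_of_chiK_neg hc hh ?_
  unfold chi at hlam; unfold chiK
  nlinarith [Real.exp_pos (-(lam * c * h))]

theorem IsUniquePosRoot.lt_of_delay_lt {h₁ h₂ mu₁ mu₂ : ℝ}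
    (hmu₁ : IsUniquePosRoot (chiK c h₁) mu₁) (hmu₂ : IsUniquePosRoot (chiK c h₂) mu₂)
    (hc : 0 < c) (hh : h₁ < h₂) : mu₂ < mu₁ :=
  hmu₂.lt_of_chiK_pos hmu₁.1.le
    (hmu₁.2.1 ▸ chiK_lt_of_delay_lt (mul_pos hmu₁.1 hc) hh)

end Roots

/-- Secant version, cleared of denominators, of `∂_c λ₁ / λ₁ - ∂_c μ₁ / μ₁`, for the roots
`l₁, m₁` at speed `c₁` and `l₂, m₂` at speed `c₂`. -/
def secantGap (k h l₁ m₁ c₁ l₂ m₂ c₂ : ℝ) : ℝ :=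
  m₁ * l₂ * (1 + k * h * Real.exp (-(l₂ * c₂ * h))) *
      (m₁ + m₂ - c₁ + h * c₁ * Real.exp (-(m₂ * c₂ * h))) -
    l₁ * m₂ * (1 - h * Real.exp (-(m₂ * c₂ * h))) *
      (l₁ + l₂ - c₁ - k * h * c₁ * Real.exp (-(l₂ * c₂ * h)))

section Secant

variable {k h c₁ c₂ l₁ l₂ m₁ m₂ : ℝ}

theorem chi_secant_le (hk : 0 ≤ k) (he₁ : chi k c₁ h l₁ = 0) (he₂ : chi k c₂ h l₂ = 0) :
    l₂ * (c₂ - c₁) * (1 + k * h * Real.exp (-(l₂ * c₂ * h))) ≤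
      (l₂ - l₁) * (l₁ + l₂ - c₁ - k * h * c₁ * Real.exp (-(l₂ * c₂ * h))) := by
  have hexp := mul_le_mul_of_nonneg_left (sub_mul_exp_neg_le (l₁ * c₁ * h) (l₂ * c₂ * h)) hk
  unfold chi at he₁ he₂
  nlinarith

theorem chiK_secant_le (hf₁ : chiK c₁ h m₁ = 0) (hf₂ : chiK c₂ h m₂ = 0) :
    (m₂ - m₁) * (m₁ + m₂ - c₁ + h * c₁ * Real.exp (-(m₂ * c₂ * h))) ≤
      m₂ * (c₂ - c₁) * (1 - h * Real.exp (-(m₂ * c₂ * h))) := by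
  have hexp := sub_mul_exp_neg_le (m₁ * c₁ * h) (m₂ * c₂ * h)
  unfold chiK at hf₁ hf₂
  nlinarith

theorem mul_lt_mul_of_secantGap_pos (hk : 0 < k) (hh : 0 ≤ h) (hc₁ : 0 < c₁) (hc : c₁ < c₂)
    (he₁ : chi k c₁ h l₁ = 0) (he₂ : chi k c₂ h l₂ = 0)
    (hf₁ : chiK c₁ h m₁ = 0) (hf₂ : chiK c₂ h m₂ = 0)
    (hl₁ : 0 < l₁) (hl : l₁ < l₂) (hm₁ : 0 < m₁) (hm₂ : 0 < m₂)
    (hgap : 0 < secantGap k h l₁ m₁ c₁ l₂ m₂ c₂) :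
    l₁ * m₂ < l₂ * m₁ := by
  set E := Real.exp (-(l₂ * c₂ * h))
  set F := Real.exp (-(m₂ * c₂ * h))
  set W := l₁ + l₂ - c₁ - k * h * c₁ * E
  set V := m₁ + m₂ - c₁ + h * c₁ * F
  have hA : l₂ * (c₂ - c₁) * (1 + k * h * E) ≤ (l₂ - l₁) * W :=
    chi_secant_le hk.le he₁ he₂
  have hB : (m₂ - m₁) * V ≤ m₂ * (c₂ - c₁) * (1 - h * F) :=
    chiK_secant_le hf₁ hf₂
  have hV : 0 < V := by
    have := speed_lt_of_chiK_eq_zero hm₁ hf₁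
    have : 0 ≤ h * c₁ * F := by positivity
    linarith
  have hW : 0 < W := by
    have : 0 < l₂ * (c₂ - c₁) * (1 + k * h * E) :=
      mul_pos (mul_pos (hl₁.trans hl) (sub_pos.mpr hc)) (by positivity)
    nlinarith
  have hgap' : l₁ * m₂ * (1 - h * F) * W < m₁ * l₂ * (1 + k * h * E) * V := by
    unfold secantGap at hgap; linarith
  have key : (m₂ - m₁) * l₁ * (V * W) < (l₂ - l₁) * m₁ * (V * W) := by
    calc (m₂ - m₁) * l₁ * (V * W) = ((m₂ - m₁) * V) * (l₁ * W) := by ring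
      _ ≤ (m₂ * (c₂ - c₁) * (1 - h * F)) * (l₁ * W) := by gcongr
      _ = (c₂ - c₁) * (l₁ * m₂ * (1 - h * F) * W) := by ring
      _ < (c₂ - c₁) * (m₁ * l₂ * (1 + k * h * E) * V) := by gcongr
      _ = (l₂ * (c₂ - c₁) * (1 + k * h * E)) * (m₁ * V) := by ring
      _ ≤ ((l₂ - l₁) * W) * (m₁ * V) := by gcongr
      _ = (l₂ - l₁) * m₁ * (V * W) := by ring
  nlinarith [lt_of_mul_lt_mul_right key (mul_pos hV hW).le]

theorem secantGap_self_pos {c l m : ℝ} (hk : 0 < k) (hh : 0 ≤ h) (hc : 0 < c) (hl : 0 < l)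
    (hlm : l < m) (hslope : 0 ≤ 2 * l - c - k * c * h * Real.exp (-(l * c * h))) :
    0 < secantGap k h l m c l m c := by
  set E := Real.exp (-(l * c * h))
  set F := Real.exp (-(m * c * h))
  have hE : 0 ≤ k * h * E := by positivity
  have hF : 0 ≤ h * F := by positivity
  have hcF : 0 ≤ h * c * F := by positivity
  have hinner : (1 - h * F) * (2 * l - c - k * h * c * E) <
      (1 + k * h * E) * (2 * m - c + h * c * F) := by
    have hP : 0 ≤ 2 * l - c - k * h * c * E := by linarith
    have hPQ : 2 * l - c - k * h * c * E < 2 * m - c + h * c * F := by nlinarith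
    nlinarith
  have := mul_lt_mul_of_pos_left hinner (mul_pos (hl.trans hlm) hl)
  unfold secantGap
  linarith

end Secant

theorem continuousWithinAt_of_isUniquePosRoot {mu : ℝ → ℝ → ℝ}
    (hmu : ∀ c h, 0 ≤ h → 0 < c → IsUniquePosRoot (chiK c h) (mu c h)) {c₀ h₀ : ℝ}
    (hc₀ : 0 < c₀) (hh₀ : 0 ≤ h₀) :
    ContinuousWithinAt (fun p : ℝ × ℝ => mu p.1 p.2) {p | 0 ≤ p.2} (c₀, h₀) := by
  have hchiK (z : ℝ) : ContinuousAt (fun p : ℝ × ℝ => chiK p.1 p.2 z) (c₀, h₀) :=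
    (by fun_prop : Continuous fun p : ℝ × ℝ => chiK p.1 p.2 z).continuousAt
  have hpos : ∀ᶠ p in 𝓝[{p | 0 ≤ p.2}] (c₀, h₀), 0 < p.1 ∧ 0 ≤ p.2 :=
    (continuousAt_fst.eventually (lt_mem_nhds hc₀)).filter_mono nhdsWithin_le_nhds
      |>.and self_mem_nhdsWithin
  have hmu₀ := hmu c₀ h₀ hh₀ hc₀
  refine tendsto_order.2 ⟨fun a ha => ?_, fun b hb => ?_⟩
  · have hneg : chiK c₀ h₀ (max a 0) < 0 :=
      hmu₀.chiK_neg_of_lt (le_max_right a 0) (max_lt ha hmu₀.1)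
    filter_upwards [hpos, ((hchiK _).eventually (gt_mem_nhds hneg)).filter_mono
      nhdsWithin_le_nhds] with p ⟨hc, hh⟩ hp
    exact (le_max_left a 0).trans_lt ((hmu p.1 p.2 hh hc).lt_of_chiK_neg hc hh hp)
  · have hpos' : 0 < chiK c₀ h₀ b := hmu₀.chiK_pos_of_gt hc₀ hh₀ hb
    filter_upwards [hpos, ((hchiK _).eventually (lt_mem_nhds hpos')).filter_mono
      nhdsWithin_le_nhds] with p ⟨hc, hh⟩ hp
    exact (hmu p.1 p.2 hh hc).lt_of_chiK_pos (hmu₀.1.trans hb).le hp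

theorem isCsharp_of_tendsto {k c h : ℝ} {cs hs : ℕ → ℝ} (hk : 0 < k)
    (hcs : ∀ n, IsCsharp k (hs n) (cs n)) (hclim : Tendsto cs atTop (𝓝 c))
    (hhlim : Tendsto hs atTop (𝓝 h)) (hc : 0 < c) (hh : 0 ≤ h) : IsCsharp k h c := by
  choose hcpos z hzpos hroot hslope using hcs
  obtain ⟨B, hB⟩ := hclim.bddAbove_range
  have hzmem (n : ℕ) : z n ∈ Icc 0 (B + 1) :=
    ⟨(hzpos n).le, (lt_add_one_of_chi_eq_zero hk (hcpos n) (hroot n)).le.trans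
      (by linarith [hB ⟨n, rfl⟩])⟩
  obtain ⟨zbar, -, φ, hφ, hzlim⟩ := isCompact_Icc.tendsto_subseq hzmem
  have hlim : Tendsto (fun n => (cs (φ n), hs (φ n), z (φ n))) atTop (𝓝 (c, h, zbar)) :=
    (hclim.comp hφ.tendsto_atTop).prodMk_nhds ((hhlim.comp hφ.tendsto_atTop).prodMk_nhds hzlim)
  have hchi : Continuous fun p : ℝ × ℝ × ℝ => chi k p.1 p.2.1 p.2.2 := by fun_prop
  have hderiv : Continuous fun p : ℝ × ℝ × ℝ =>
      2 * p.2.2 - p.1 - k * p.1 * p.2.1 * Real.exp (-(p.2.2 * p.1 * p.2.1)) := by fun_prop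
  have hroot' : chi k c h zbar = 0 :=
    tendsto_nhds_unique ((hchi.tendsto _).comp hlim)
      (by simpa only [Function.comp_def, hroot] using tendsto_const_nhds)
  have hslope' : 2 * zbar - c - k * c * h * Real.exp (-(zbar * c * h)) = 0 :=
    tendsto_nhds_unique ((hderiv.tendsto _).comp hlim)
      (by simpa only [Function.comp_def, hslope] using tendsto_const_nhds)
  have : 0 ≤ k * c * h * Real.exp (-(zbar * c * h)) := by positivity
  exact ⟨hc, zbar, by linarith, hroot', hslope'⟩

structure CharacteristicRoots (k : ℝ) (csharp : ℝ → ℝ) (lam mu : ℝ → ℝ → ℝ) : Prop where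
  one_lt : 1 < k
  isCsharp : ∀ h, 0 ≤ h → IsCsharp k h (csharp h)
  eq_csharp : ∀ h, 0 ≤ h → ∀ c, IsCsharp k h c → c = csharp h
  csharp_anti : ∀ h₁ h₂, 0 ≤ h₁ → h₁ < h₂ → csharp h₂ ≤ csharp h₁
  lam_pos : ∀ c h, 0 ≤ h → csharp h ≤ c → 0 < lam c h
  isGreatest_lam : ∀ c h, 0 ≤ h → csharp h ≤ c → IsGreatest {z | chi k c h z = 0} (lam c h)
  isUniquePosRoot_mu : ∀ c h, 0 ≤ h → 0 < c → IsUniquePosRoot (chiK c h) (mu c h)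

def admissible (csharp : ℝ → ℝ) : Set (ℝ × ℝ) := {p | 0 ≤ p.2 ∧ csharp p.2 ≤ p.1}

namespace CharacteristicRoots

variable {k : ℝ} {csharp : ℝ → ℝ} {lam mu : ℝ → ℝ → ℝ} {c h : ℝ}

theorem k_pos (H : CharacteristicRoots k csharp lam mu) : 0 < k :=
  zero_lt_one.trans H.one_lt

theorem speed_pos (H : CharacteristicRoots k csharp lam mu) (hh : 0 ≤ h) (hc : csharp h ≤ c) :
    0 < c :=
  (H.isCsharp h hh).1.trans_le hc

theorem csharp_le_of_le (H : CharacteristicRoots k csharp lam mu) {h₁ h₂ : ℝ} (hh₁ : 0 ≤ h₁)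
    (hh : h₁ ≤ h₂) : csharp h₂ ≤ csharp h₁ := by
  rcases hh.eq_or_lt with rfl | hlt
  · exact le_rfl
  · exact H.csharp_anti h₁ h₂ hh₁ hlt

theorem lam_lt_of_speed_lt (H : CharacteristicRoots k csharp lam mu) {c₁ c₂ : ℝ} (hh : 0 ≤ h)
    (hc₁ : csharp h ≤ c₁) (hc : c₁ < c₂) : lam c₁ h < lam c₂ h := by
  refine lt_of_isGreatest_of_chi_neg H.k_pos (H.speed_pos hh (hc₁.trans hc.le))
    (H.isGreatest_lam c₂ h hh (hc₁.trans hc.le)) ?_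
  rw [← (H.isGreatest_lam c₁ h hh hc₁).1]
  exact chi_lt_of_speed_lt H.k_pos.le hh (H.lam_pos c₁ h hh hc₁) hc

theorem lam_lt_of_delay_lt (H : CharacteristicRoots k csharp lam mu) {h₁ h₂ : ℝ}
    (hh₁ : 0 ≤ h₁) (hh : h₁ < h₂) (hc : csharp h₁ ≤ c) : lam c h₁ < lam c h₂ := by
  have hc₂ : csharp h₂ ≤ c := (H.csharp_anti h₁ h₂ hh₁ hh).trans hc
  refine lt_of_isGreatest_of_chi_neg H.k_pos (H.speed_pos hh₁ hc)
    (H.isGreatest_lam c h₂ (hh₁.trans hh.le) hc₂) ?_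
  rw [← (H.isGreatest_lam c h₁ hh₁ hc).1]
  exact chi_lt_of_delay_lt H.k_pos (mul_pos (H.lam_pos c h₁ hh₁ hc) (H.speed_pos hh₁ hc)) hh

theorem ratio_lt_of_delay_lt (H : CharacteristicRoots k csharp lam mu) {h₁ h₂ : ℝ}
    (hh₁ : 0 ≤ h₁) (hh : h₁ < h₂) (hc : csharp h₁ ≤ c) :
    lam c h₁ / mu c h₁ < lam c h₂ / mu c h₂ := by
  have hc0 := H.speed_pos hh₁ hc
  have hmu₁ := H.isUniquePosRoot_mu c h₁ hh₁ hc0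
  have hmu₂ := H.isUniquePosRoot_mu c h₂ (hh₁.trans hh.le) hc0
  exact div_lt_div₀ (H.lam_lt_of_delay_lt hh₁ hh hc) (hmu₁.lt_of_delay_lt hmu₂ hc0 hh).le
    (H.lam_pos c h₂ (hh₁.trans hh.le) ((H.csharp_anti h₁ h₂ hh₁ hh).trans hc)).le hmu₂.1

theorem upperSemicontinuousWithinAt_lam (H : CharacteristicRoots k csharp lam mu)
    {p₀ : ℝ × ℝ} (hp₀ : p₀ ∈ admissible csharp) :
    UpperSemicontinuousWithinAt (fun p : ℝ × ℝ => lam p.1 p.2) (admissible csharp) p₀ := by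
  intro y hy
  have hchi (z : ℝ) : ContinuousAt (fun p : ℝ × ℝ => chi k p.1 p.2 z) p₀ :=
    (by fun_prop : Continuous fun p : ℝ × ℝ => chi k p.1 p.2 z).continuousAt
  have hlam₀ := H.isGreatest_lam p₀.1 p₀.2 hp₀.1 hp₀.2
  have hpos := chi_pos_of_isGreatest_of_lt H.k_pos (H.speed_pos hp₀.1 hp₀.2) hlam₀ hy
  have hroots := eventually_forall_eq_zero_lt (fun p => convexOn_chi H.k_pos.le) (hchi _) (hchi _)
    hy (hlam₀.1.trans_lt hpos) hpos
  filter_upwards [hroots.filter_mono nhdsWithin_le_nhds, self_mem_nhdsWithin] with p hp hpD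
  exact hp _ (H.isGreatest_lam p.1 p.2 hpD.1 hpD.2).1

theorem lowerSemicontinuousWithinAt_lam (H : CharacteristicRoots k csharp lam mu)
    (hh : 0 ≤ h) (hc : csharp h < c) :
    LowerSemicontinuousWithinAt (fun p : ℝ × ℝ => lam p.1 p.2) (admissible csharp) (c, h) := by
  intro y hy
  have hc0 := H.speed_pos hh hc.le
  have hlam := H.isGreatest_lam c h hh hc.le
  obtain ⟨z, hz, hneg⟩ : ∃ z ∈ Ioo y (lam c h), chi k c h z < 0 := by
    by_contra! hflat
    refine hc.ne' (H.eq_csharp h hh c ?_)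
    exact isCsharp_of_isGreatest_of_nonneg H.k_pos hc0 (H.lam_pos c h hh hc.le) hlam
      (sub_pos.mpr hy) (by simpa using hflat)
  have hchi : ContinuousAt (fun p : ℝ × ℝ => chi k p.1 p.2 z) (c, h) :=
    (by fun_prop : Continuous fun p : ℝ × ℝ => chi k p.1 p.2 z).continuousAt
  filter_upwards [(hchi.eventually (gt_mem_nhds hneg)).filter_mono nhdsWithin_le_nhds,
    self_mem_nhdsWithin] with p hp hpD
  exact hz.1.trans (lt_of_isGreatest_of_chi_neg H.k_pos (H.speed_pos hpD.1 hpD.2)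
    (H.isGreatest_lam p.1 p.2 hpD.1 hpD.2) hp)

theorem continuousOn_lam (H : CharacteristicRoots k csharp lam mu) (hh : 0 ≤ h) :
    ContinuousOn (fun c => lam c h) (Ici (csharp h)) := by
  intro s hs
  have hline : Tendsto (fun c => (c, h)) (𝓝[Ici (csharp h)] s) (𝓝[admissible csharp] (s, h)) :=
    tendsto_nhdsWithin_iff.2 ⟨(Continuous.prodMk_left h).continuousWithinAt,
      eventually_nhdsWithin_of_forall fun c hc => ⟨hh, hc⟩⟩
  refine continuousWithinAt_iff_lower_upperSemicontinuousWithinAt.2 ⟨fun y hy => ?_,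
    fun y hy => hline.eventually
      (H.upperSemicontinuousWithinAt_lam (show (s, h) ∈ admissible csharp from ⟨hh, hs⟩) y hy)⟩
  rcases (mem_Ici.mp hs).eq_or_lt with rfl | hlt
  · filter_upwards [self_mem_nhdsWithin] with c hc
    rcases (mem_Ici.mp hc).eq_or_lt with rfl | hlt'
    · exact hy
    · exact hy.trans (H.lam_lt_of_speed_lt hh le_rfl hlt')
  · exact hline.eventually (H.lowerSemicontinuousWithinAt_lam hh hlt y hy)

theorem continuousOn_mu (H : CharacteristicRoots k csharp lam mu) (hh : 0 ≤ h) :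
    ContinuousOn (fun c => mu c h) (Ici (csharp h)) := fun _ hs =>
  (continuousWithinAt_of_isUniquePosRoot H.isUniquePosRoot_mu (H.speed_pos hh hs) hh).comp
    (f := fun c => (c, h)) (Continuous.prodMk_left h).continuousWithinAt
    fun _ _ => (hh : 0 ≤ h)

theorem continuousOn_ratio (H : CharacteristicRoots k csharp lam mu) (hh : 0 ≤ h) :
    ContinuousOn (fun c => lam c h / mu c h) (Ici (csharp h)) :=
  (H.continuousOn_lam hh).div (H.continuousOn_mu hh) fun c hc =>
    (H.isUniquePosRoot_mu c h hh (H.speed_pos hh hc)).1.ne'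

theorem eventually_ratio_lt (H : CharacteristicRoots k csharp lam mu) {s : ℝ} (hh : 0 ≤ h)
    (hs : csharp h ≤ s) : ∀ᶠ c in 𝓝[>] s, lam s h / mu s h < lam c h / mu c h := by
  have hs0 := H.speed_pos hh hs
  have hmu := H.isUniquePosRoot_mu s h hh hs0
  have hlam := H.isGreatest_lam s h hh hs
  have hright : 𝓝[>] s ≤ 𝓝[Ici (csharp h)] s :=
    nhdsWithin_mono s fun c (hc : s < c) => hs.trans hc.le
  have hlim : Tendsto (fun c => (lam c h, mu c h, c)) (𝓝[>] s) (𝓝 (lam s h, mu s h, s)) :=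
    ((H.continuousOn_lam hh s hs).tendsto.mono_left hright).prodMk_nhds
      (((H.continuousOn_mu hh s hs).tendsto.mono_left hright).prodMk_nhds nhdsWithin_le_nhds)
  have hcont : Continuous fun p : ℝ × ℝ × ℝ =>
      secantGap k h (lam s h) (mu s h) s p.1 p.2.1 p.2.2 := by
    unfold secantGap; fun_prop
  have hdiag : 0 < secantGap k h (lam s h) (mu s h) s (lam s h) (mu s h) s :=
    secantGap_self_pos H.k_pos hh hs0 (H.lam_pos s h hh hs)
      (hmu.lt_of_chi_eq_zero H.k_pos hs0 hh hlam.1)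
      (chi_deriv_nonneg_of_isGreatest H.k_pos hs0 hlam)
  filter_upwards [((hcont.tendsto _).comp hlim).eventually (lt_mem_nhds hdiag),
    self_mem_nhdsWithin] with c hgap hc
  have hc' : csharp h ≤ c := hs.trans (le_of_lt hc)
  have hmu' := H.isUniquePosRoot_mu c h hh (hs0.trans hc)
  rw [div_lt_div_iff₀ hmu.1 hmu'.1]
  exact mul_lt_mul_of_secantGap_pos H.k_pos hh hs0 hc hlam.1 (H.isGreatest_lam c h hh hc').1
    hmu.2.1 hmu'.2.1 (H.lam_pos s h hh hs) (H.lam_lt_of_speed_lt hh hs hc) hmu.1 hmu'.1 hgap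

theorem strictMonoOn_ratio (H : CharacteristicRoots k csharp lam mu) (hh : 0 ≤ h) :
    StrictMonoOn (fun c => lam c h / mu c h) (Ici (csharp h)) :=
  StrictMonoOn.of_continuousOn_of_eventually_lt ordConnected_Ici (H.continuousOn_ratio hh)
    fun _ hs => H.eventually_ratio_lt hh hs

theorem csharp_mem_Icc_of_tendsto (H : CharacteristicRoots k csharp lam mu) {hs : ℕ → ℝ}
    {h₀ A B : ℝ} (hhs : ∀ n, 0 ≤ hs n) (hlim : Tendsto hs atTop (𝓝 h₀)) (hA : 0 < A)
    (hmem : ∀ n, csharp (hs n) ∈ Icc A B) : csharp h₀ ∈ Icc A B := by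
  obtain ⟨cbar, hcbar, φ, hφ, hclim⟩ := isCompact_Icc.tendsto_subseq hmem
  have hh₀ : 0 ≤ h₀ := ge_of_tendsto' hlim hhs
  have := isCsharp_of_tendsto H.k_pos (fun n => H.isCsharp _ (hhs (φ n))) hclim
    (hlim.comp hφ.tendsto_atTop) (hA.trans_le hcbar.1) hh₀
  exact H.eq_csharp h₀ hh₀ cbar this ▸ hcbar

theorem eventually_lt_csharp_nhdsGT (H : CharacteristicRoots k csharp lam mu) {h₀ a : ℝ}
    (hh₀ : 0 ≤ h₀) (ha : a < csharp h₀) : ∀ᶠ h in 𝓝[>] h₀, a < csharp h := by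
  by_contra hfreq
  rw [not_eventually] at hfreq
  have hle (h : ℝ) (hh : h₀ < h) : csharp h ≤ a := by
    obtain ⟨h', hle, hh'⟩ := (hfreq.and_eventually (Ioo_mem_nhdsGT hh)).exists
    exact (H.csharp_anti h' h (hh₀.trans hh'.1.le) hh'.2).trans (not_lt.mp hle)
  have hlim : Tendsto (fun n : ℕ => h₀ + 1 / ((n : ℝ) + 1)) atTop (𝓝 h₀) := by
    simpa using tendsto_one_div_add_atTop_nhds_zero_nat.const_add h₀
  have hmem (n : ℕ) : csharp (h₀ + 1 / ((n : ℝ) + 1)) ∈ Icc (csharp (h₀ + 1)) a :=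
    ⟨H.csharp_le_of_le (by positivity) (by linarith [(one_div_succ_mem_Ioc n).2]),
      hle _ (by linarith [(one_div_succ_mem_Ioc n).1])⟩
  exact ha.not_ge (H.csharp_mem_Icc_of_tendsto (fun n => by positivity) hlim
    (H.isCsharp _ (by linarith)).1 hmem).2

theorem eventually_csharp_lt_nhdsLT (H : CharacteristicRoots k csharp lam mu) {h₀ b : ℝ}
    (hh₀ : 0 < h₀) (hb : csharp h₀ < b) : ∀ᶠ h in 𝓝[<] h₀, csharp h < b := by
  by_contra hfreq
  rw [not_eventually] at hfreq
  have hge (h : ℝ) (hh : 0 ≤ h) (hlt : h < h₀) : b ≤ csharp h := by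
    obtain ⟨h', hge, hh'⟩ := (hfreq.and_eventually (Ioo_mem_nhdsLT hlt)).exists
    exact (not_lt.mp hge).trans (H.csharp_anti h h' hh hh'.1)
  have hlim : Tendsto (fun n : ℕ => h₀ - h₀ / 2 * (1 / ((n : ℝ) + 1))) atTop (𝓝 h₀) := by
    simpa using (tendsto_one_div_add_atTop_nhds_zero_nat.const_mul (h₀ / 2)).const_sub h₀
  have hbound (n : ℕ) : h₀ / 2 ≤ h₀ - h₀ / 2 * (1 / ((n : ℝ) + 1)) ∧
      h₀ - h₀ / 2 * (1 / ((n : ℝ) + 1)) < h₀ := by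
    obtain ⟨hpos, hle⟩ := one_div_succ_mem_Ioc n
    constructor <;> nlinarith
  have hmem (n : ℕ) : csharp (h₀ - h₀ / 2 * (1 / ((n : ℝ) + 1))) ∈ Icc b (csharp (h₀ / 2)) :=
    ⟨hge _ (by linarith [hbound n]) (hbound n).2,
      H.csharp_le_of_le (by positivity) (hbound n).1⟩
  exact hb.not_ge (H.csharp_mem_Icc_of_tendsto (fun n => by linarith [hbound n]) hlim
    ((H.isCsharp h₀ hh₀.le).1.trans hb) hmem).1

theorem eventually_ratio_lt_of_tendsto (H : CharacteristicRoots k csharp lam mu)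
    {l : Filter ℝ} {c h₀ r : ℝ} (hadm : (c, h₀) ∈ admissible csharp)
    (hline : Tendsto (fun h => (c, h)) l (𝓝[admissible csharp] (c, h₀)))
    (hr : lam c h₀ / mu c h₀ < r) : ∀ᶠ h in l, lam c h / mu c h < r := by
  have hc0 := H.speed_pos hadm.1 hadm.2
  have hmu : Tendsto (fun h => mu c h) l (𝓝 (mu c h₀)) :=
    (continuousWithinAt_of_isUniquePosRoot H.isUniquePosRoot_mu hc0 hadm.1).tendsto.comp
      (hline.mono_right (nhdsWithin_mono _ fun p hp => hp.1))
  rw [div_lt_iff₀ (H.isUniquePosRoot_mu c h₀ hadm.1 hc0).1] at hr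
  obtain ⟨y, hlamy, hyr⟩ := exists_between hr
  filter_upwards [hline.eventually (H.upperSemicontinuousWithinAt_lam hadm y hlamy),
    (hmu.const_mul r).eventually (lt_mem_nhds hyr), hline.eventually self_mem_nhdsWithin]
    with h hlam hmuh hadm'
  rw [div_lt_iff₀ (H.isUniquePosRoot_mu c h hadm'.1 hc0).1]
  linarith

theorem eventually_lt_ratio_of_tendsto (H : CharacteristicRoots k csharp lam mu)
    {l : Filter ℝ} {c h₀ r : ℝ} (hh₀ : 0 ≤ h₀) (hc : csharp h₀ < c)
    (hline : Tendsto (fun h => (c, h)) l (𝓝[admissible csharp] (c, h₀)))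
    (hr : r < lam c h₀ / mu c h₀) : ∀ᶠ h in l, r < lam c h / mu c h := by
  have hc0 := H.speed_pos hh₀ hc.le
  have hmu : Tendsto (fun h => mu c h) l (𝓝 (mu c h₀)) :=
    (continuousWithinAt_of_isUniquePosRoot H.isUniquePosRoot_mu hc0 hh₀).tendsto.comp
      (hline.mono_right (nhdsWithin_mono _ fun p hp => hp.1))
  rw [lt_div_iff₀ (H.isUniquePosRoot_mu c h₀ hh₀ hc0).1] at hr
  obtain ⟨y, hry, hylam⟩ := exists_between hr
  filter_upwards [hline.eventually (H.lowerSemicontinuousWithinAt_lam hh₀ hc y hylam),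
    (hmu.const_mul r).eventually (gt_mem_nhds hry), hline.eventually self_mem_nhdsWithin]
    with h hlam hmuh hadm'
  rw [lt_div_iff₀ (H.isUniquePosRoot_mu c h hadm'.1 hc0).1]
  linarith

section PushedSpeed

variable {s : Set ℝ} {cstar : ℝ → ℝ} {r : ℝ}

theorem strictAntiOn_of_ratio_eq (H : CharacteristicRoots k csharp lam mu) (hs : s ⊆ Ici 0)
    (hcstar : ∀ h ∈ s, csharp h ≤ cstar h ∧ lam (cstar h) h / mu (cstar h) h = r) :
    StrictAntiOn cstar s := by
  intro h₁ hh₁ h₂ hh₂ hh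
  by_contra! hle
  have hc₂ : csharp h₁ ≤ cstar h₂ := (hcstar h₁ hh₁).1.trans hle
  have := (H.strictMonoOn_ratio (hs hh₁)).monotoneOn (hcstar h₁ hh₁).1 hc₂ hle
  have := H.ratio_lt_of_delay_lt (hs hh₁) hh hc₂
  linarith [(hcstar h₁ hh₁).2, (hcstar h₂ hh₂).2]

theorem eventually_lt_of_ratio_eq_nhdsGT (H : CharacteristicRoots k csharp lam mu)
    (hs : s ⊆ Ici 0)
    (hcstar : ∀ h ∈ s, csharp h ≤ cstar h ∧ lam (cstar h) h / mu (cstar h) h = r)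
    {h₀ a : ℝ} (hh₀ : h₀ ∈ s) (ha : a < cstar h₀) : ∀ᶠ h in 𝓝[>] h₀, h ∈ s → a < cstar h := by
  have hh₀' : 0 ≤ h₀ := hs hh₀
  rcases lt_or_ge a (csharp h₀) with ha' | ha'
  · filter_upwards [H.eventually_lt_csharp_nhdsGT hh₀' ha'] with h hlt hh
    exact hlt.trans_le (hcstar h hh).1
  have hline : Tendsto (fun h => (a, h)) (𝓝[>] h₀) (𝓝[admissible csharp] (a, h₀)) :=
    tendsto_nhdsWithin_iff.2 ⟨((Continuous.prodMk_right a).tendsto h₀).mono_left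
      nhdsWithin_le_nhds, eventually_nhdsWithin_of_forall fun h (hh : h₀ < h) =>
        ⟨hh₀'.trans hh.le, (H.csharp_anti h₀ h hh₀' hh).trans ha'⟩⟩
  have hratio : lam a h₀ / mu a h₀ < r :=
    (hcstar h₀ hh₀).2 ▸ H.strictMonoOn_ratio hh₀' ha' (hcstar h₀ hh₀).1 ha
  filter_upwards [H.eventually_ratio_lt_of_tendsto ⟨hh₀', ha'⟩ hline hratio,
    hline.eventually self_mem_nhdsWithin] with h hlt hadm hmem
  by_contra! hle
  have := (H.strictMonoOn_ratio (hs hmem)).monotoneOn (hcstar h hmem).1 hadm.2 hle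
  linarith [(hcstar h hmem).2]

theorem eventually_lt_of_ratio_eq_nhdsLT (H : CharacteristicRoots k csharp lam mu)
    (hs : s ⊆ Ici 0)
    (hcstar : ∀ h ∈ s, csharp h ≤ cstar h ∧ lam (cstar h) h / mu (cstar h) h = r)
    {h₀ b : ℝ} (hh₀ : h₀ ∈ s) (hb : cstar h₀ < b) : ∀ᶠ h in 𝓝[<] h₀, h ∈ s → cstar h < b := by
  rcases (show 0 ≤ h₀ from hs hh₀).eq_or_lt with rfl | hpos
  · filter_upwards [self_mem_nhdsWithin] with h (hh : h < 0) hmem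
    exact absurd (show 0 ≤ h from hs hmem) hh.not_ge
  have hb' : csharp h₀ < b := (hcstar h₀ hh₀).1.trans_lt hb
  have hadm : ∀ᶠ h in 𝓝[<] h₀, (b, h) ∈ admissible csharp := by
    filter_upwards [Ioo_mem_nhdsLT hpos, H.eventually_csharp_lt_nhdsLT hpos hb'] with h hh hlt
    exact ⟨hh.1.le, hlt.le⟩
  have hline : Tendsto (fun h => (b, h)) (𝓝[<] h₀) (𝓝[admissible csharp] (b, h₀)) :=
    tendsto_nhdsWithin_iff.2 ⟨((Continuous.prodMk_right b).tendsto h₀).mono_left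
      nhdsWithin_le_nhds, hadm⟩
  have hratio : r < lam b h₀ / mu b h₀ :=
    (hcstar h₀ hh₀).2 ▸ H.strictMonoOn_ratio hpos.le (hcstar h₀ hh₀).1 hb'.le hb
  filter_upwards [H.eventually_lt_ratio_of_tendsto hpos.le hb' hline hratio, hadm]
    with h hlt hadm hmem
  by_contra! hle
  have := (H.strictMonoOn_ratio (hs hmem)).monotoneOn hadm.2 (hcstar h hmem).1 hle
  linarith [(hcstar h hmem).2]

theorem continuousOn_of_ratio_eq (H : CharacteristicRoots k csharp lam mu) (hs : s ⊆ Ici 0)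
    (hcstar : ∀ h ∈ s, csharp h ≤ cstar h ∧ lam (cstar h) h / mu (cstar h) h = r) :
    ContinuousOn cstar s := by
  intro h₀ hh₀
  have hanti := H.strictAntiOn_of_ratio_eq hs hcstar
  refine tendsto_order.2 ⟨fun a ha => ?_, fun b hb => ?_⟩
  · rw [eventually_nhdsWithin_iff, ← nhdsLE_sup_nhdsGT, eventually_sup]
    exact ⟨eventually_nhdsWithin_of_forall fun h (hh : h ≤ h₀) hmem =>
      ha.trans_le (hanti.antitoneOn hmem hh₀ hh),
      H.eventually_lt_of_ratio_eq_nhdsGT hs hcstar hh₀ ha⟩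
  · rw [eventually_nhdsWithin_iff, ← nhdsLT_sup_nhdsGE, eventually_sup]
    exact ⟨H.eventually_lt_of_ratio_eq_nhdsLT hs hcstar hh₀ hb,
      eventually_nhdsWithin_of_forall fun h (hh : h₀ ≤ h) hmem =>
        (hanti.antitoneOn hh₀ hmem hh).trans_lt hb⟩

end PushedSpeed

end CharacteristicRoots

theorem pushed_speed_decreasing_general
    (k : ℝ) (hk1 : 1 < k)
    (csharp : ℝ → ℝ)
    (hcsharp : ∀ h : ℝ, 0 ≤ h →
      IsCsharp k h (csharp h) ∧ ∀ c : ℝ, IsCsharp k h c → c = csharp h)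
    (hcsharp_anti : ∀ h₁ h₂ : ℝ, 0 ≤ h₁ → h₁ < h₂ → csharp h₂ ≤ csharp h₁)
    (lam1 mu1 : ℝ → ℝ → ℝ)
    (hlam1 : ∀ c h : ℝ, 0 ≤ h → csharp h ≤ c →
      0 < lam1 c h ∧ chi k c h (lam1 c h) = 0 ∧ ∀ z : ℝ, chi k c h z = 0 → z ≤ lam1 c h)
    (hmu1 : ∀ c h : ℝ, 0 ≤ h → 0 < c →
      0 < mu1 c h ∧ chiK c h (mu1 c h) = 0 ∧
        ∀ z : ℝ, 0 < z → chiK c h z = 0 → z = mu1 c h) :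
    (∀ c h₁ h₂ : ℝ, 0 ≤ h₁ → h₁ < h₂ → csharp h₁ ≤ c →
      lam1 c h₁ / mu1 c h₁ < lam1 c h₂ / mu1 c h₂) ∧
    (∀ h : ℝ, 0 ≤ h → StrictMonoOn (fun c => lam1 c h / mu1 c h) (Ici (csharp h))) ∧
    (∀ (hp : ℝ) (cstar : ℝ → ℝ), 0 < hp →
      (∀ h ∈ Icc (0 : ℝ) hp,
        csharp h ≤ cstar h ∧ lam1 (cstar h) h / mu1 (cstar h) h = (3 - k) / 4) →
      ContinuousOn cstar (Icc 0 hp) ∧ StrictAntiOn cstar (Icc 0 hp)) := by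
  have H : CharacteristicRoots k csharp lam1 mu1 :=
    { one_lt := hk1
      isCsharp := fun h hh => (hcsharp h hh).1
      eq_csharp := fun h hh => (hcsharp h hh).2
      csharp_anti := hcsharp_anti
      lam_pos := fun c h hh hc => (hlam1 c h hh hc).1
      isGreatest_lam := fun c h hh hc => ⟨(hlam1 c h hh hc).2.1, (hlam1 c h hh hc).2.2⟩
      isUniquePosRoot_mu := hmu1 }
  refine ⟨fun c h₁ h₂ hh₁ hh hc => H.ratio_lt_of_delay_lt hh₁ hh hc,
    fun h hh => H.strictMonoOn_ratio hh, fun hp cstar _ hcstar => ?_⟩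
  exact ⟨H.continuousOn_of_ratio_eq Icc_subset_Ici_self hcstar,
    H.strictAntiOn_of_ratio_eq Icc_subset_Ici_self hcstar⟩

/-- The ratio `λ₁/μ₁` is strictly increasing in the delay `h` (for fixed speed) as well
as in the velocity `c` (for fixed delay); consequently the pushed minimal speed
`c_*`, implicitly defined by `λ₁(c_*(h),h)/μ₁(c_*(h),h) = (3-k)/4`, is continuous and
strictly decreasing. -/
theorem pushed_speed_decreasing
    (k : ℝ) (hk1 : 1 < k) (hk3 : k < 3)
    (csharp : ℝ → ℝ)
    (hcsharp : ∀ h : ℝ, 0 ≤ h →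
      IsCsharp k h (csharp h) ∧ ∀ c : ℝ, IsCsharp k h c → c = csharp h)
    (hcsharp_anti : ∀ h₁ h₂ : ℝ, 0 ≤ h₁ → h₁ < h₂ → csharp h₂ ≤ csharp h₁)
    (lam1 mu1 : ℝ → ℝ → ℝ)
    (hlam1 : ∀ c h : ℝ, 0 ≤ h → csharp h ≤ c →
      0 < lam1 c h ∧ chi k c h (lam1 c h) = 0 ∧ ∀ z : ℝ, chi k c h z = 0 → z ≤ lam1 c h)
    (hmu1 : ∀ c h : ℝ, 0 ≤ h → 0 < c →
      0 < mu1 c h ∧ chiK c h (mu1 c h) = 0 ∧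
        ∀ z : ℝ, 0 < z → chiK c h z = 0 → z = mu1 c h) :
    (∀ c h₁ h₂ : ℝ, 0 ≤ h₁ → h₁ < h₂ → csharp h₁ ≤ c →
      lam1 c h₁ / mu1 c h₁ < lam1 c h₂ / mu1 c h₂) ∧
    (∀ h : ℝ, 0 ≤ h → StrictMonoOn (fun c => lam1 c h / mu1 c h) (Ici (csharp h))) ∧
    (∀ (hp : ℝ) (cstar : ℝ → ℝ), 0 < hp →
      (∀ h ∈ Icc (0 : ℝ) hp,
        csharp h ≤ cstar h ∧ lam1 (cstar h) h / mu1 (cstar h) h = (3 - k) / 4) →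
      ContinuousOn cstar (Icc 0 hp) ∧ StrictAntiOn cstar (Icc 0 hp)) :=
  pushed_speed_decreasing_general k hk1 csharp hcsharp hcsharp_anti lam1 mu1 hlam1 hmu1
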